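/- Let x = σ^∞(a) be the fixed point of a primitive substitution σ prolongable on a. Then x is linearly recurrent with constant K_σ = Q_σ·R_σ·|σ|, where Q_σ satisfies |σ^k| ≤ Q_σ·⟨σ^k⟩ for all k, R_σ is the maximal gap between successive occurrences of length-2 factors, and |σ| = max_a |σ(a)|. -/

import Mathlib

/-- The factor of the sequence `x` starting at position `i` of length `n`. -/
def seqWord {A : Type*} (x : ℕ → A) (i n : ℕ) : List A :=
  (List.range n).map (fun k => x (i + k))

/-- The word `u` occurs in the sequence `x` at position `i`. -/
def occursAt {A : Type*} (x : ℕ → A) (u : List A) (i : ℕ) : Prop :=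
  seqWord x i u.length = u

/-- `u` is a factor of the sequence `x`. -/
def IsFactor {A : Type*} (x : ℕ → A) (u : List A) : Prop :=
  ∃ i, occursAt x u i

/-- `u` is a prefix of the sequence `x`. -/
def IsPrefixSeq {A : Type*} (u : List A) (x : ℕ → A) : Prop :=
  occursAt x u 0

/-- `x` is uniformly recurrent: every factor occurs in every sufficiently long window. -/
def UnifRec {A : Type*} (x : ℕ → A) : Prop :=
  ∀ u : List A, IsFactor x u → ∃ C, ∀ i, ∃ j, i ≤ j ∧ j < i + C ∧ occursAt x u j

/-- `w` is a return word to `u` in `x`: the factor between two consecutive occurrences of `u`. -/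
def IsReturnWord {A : Type*} (x : ℕ → A) (u w : List A) : Prop :=
  ∃ i j, i < j ∧ occursAt x u i ∧ occursAt x u j ∧
    (∀ k, i < k → k < j → ¬ occursAt x u k) ∧ w = seqWord x i (j - i)

/-- Apply a morphism (given on letters) to a word, by concatenation. -/
def morphApply {I A : Type*} (θ : I → List A) (l : List I) : List A :=
  (l.map θ).flatten

/-- Iterate an endomorphism `σ` of the free monoid `n` times on a word. -/
def morphIter {A : Type*} (σ : A → List A) : ℕ → List A → List A
  | 0, l => l
  | n + 1, l => morphApply σ (morphIter σ n l)

/-- `x` is ultimately periodic. -/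
def UltPeriodic {A : Type*} (x : ℕ → A) : Prop :=
  ∃ p > 0, ∃ N, ∀ n ≥ N, x (n + p) = x n

/-- `x` is linearly recurrent with constant `K`: it is uniformly recurrent and two
successive occurrences of any nonempty factor `u` differ by at most `K * |u|`. -/
def LinRec {A : Type*} (K : ℕ) (x : ℕ → A) : Prop :=
  UnifRec x ∧ ∀ u : List A, u ≠ [] → IsFactor x u →
    ∀ i, occursAt x u i → ∃ j, i < j ∧ j ≤ i + K * u.length ∧ occursAt x u j

/-- `σ` is prolongable on the letter `a`. -/
def Prolongable {A : Type*} (σ : A → List A) (a : A) : Prop :=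
  (∃ t, σ a = a :: t ∧ t ≠ []) ∧
    Filter.Tendsto (fun n => (morphIter σ n [a]).length) Filter.atTop Filter.atTop

/-- `σ` is growing: the image of each letter has length tending to infinity. -/
def Growing {A : Type*} (σ : A → List A) : Prop :=
  ∀ a, Filter.Tendsto (fun n => (morphIter σ n [a]).length) Filter.atTop Filter.atTop

/-- `σ` is primitive: some power sends every letter to a word containing every letter. -/
def Primitive {A : Type*} (σ : A → List A) : Prop :=
  ∃ n > 0, ∀ a b : A, b ∈ morphIter σ n [a]

/-- `x` is the fixed point `σ^∞(a)` of `σ`, prolongable on `a`. -/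
def IsFixedPointOf {A : Type*} (σ : A → List A) (a : A) (x : ℕ → A) : Prop :=
  x 0 = a ∧ ∀ n, IsPrefixSeq (morphIter σ n [a]) x

/-- The word `w` belongs to the language of the endomorphism `σ`. -/
def InLang {A : Type*} (σ : A → List A) (w : List A) : Prop :=
  ∃ a n, w <:+: morphIter σ n [a]

/-- The word `u` occurs at position `i` in the word `w`. -/
def listOccursAt {A : Type*} (w u : List A) (i : ℕ) : Prop :=
  i + u.length ≤ w.length ∧ (w.drop i).take u.length = u

/-- `|σ^k|`: the maximal length of the image of a letter under `σ^k`. -/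
def maxLen {A : Type*} [Fintype A] [Nonempty A] (σ : A → List A) (k : ℕ) : ℕ :=
  Finset.univ.sup' Finset.univ_nonempty (fun a => (morphIter σ k [a]).length)

/-- `⟨σ^k⟩`: the minimal length of the image of a letter under `σ^k`. -/
def minLen {A : Type*} [Fintype A] [Nonempty A] (σ : A → List A) (k : ℕ) : ℕ :=
  Finset.univ.inf' Finset.univ_nonempty (fun a => (morphIter σ k [a]).length)

/-- `(R, θ, z)` is the derived-sequence data of `x` on the prefix `u`: `θ 0, …, θ (R-1)`
enumerate the return words to `u` in order of first appearance in `x`, `z` is the derived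
sequence, i.e. the coding of the decomposition of `x` into return words to `u`,
so that `Θ_{x,u}(z) = x`. -/
def IsDerivedSeq {A : Type*} (x : ℕ → A) (u : List A) (R : ℕ)
    (θ : ℕ → List A) (z : ℕ → ℕ) : Prop :=
  (∀ i < R, IsReturnWord x u (θ i)) ∧
  (∀ w, IsReturnWord x u w → ∃ i < R, θ i = w) ∧
  (∀ i < R, ∀ j < R, i < j →
      sInf {k | occursAt x (θ i) k} < sInf {k | occursAt x (θ j) k}) ∧
  (∀ k, z k < R) ∧
  (∀ n, IsPrefixSeq (morphApply θ (seqWord z 0 n)) x)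

/-!
Cut `x = σ^k(x)` into the blocks `σ^k(x m)` at the least level `k` at which every block is
at least as long as the factor `u`; minimality gives `⟨σ^k⟩ ≤ |σ|·|u|`. An occurrence of `u`
then lies inside the image `σ^k(x m x (m+1))` of a length-2 factor, whose next occurrence comes
at most `R` letters later; so the next occurrence of `u` comes at most
`R·|σ^k| ≤ R·Q·⟨σ^k⟩ ≤ Q·R·|σ|·|u|` positions later.
-/

section Words
variable {A : Type*}

@[simp]
theorem seqWord_length (x : ℕ → A) (i n : ℕ) : (seqWord x i n).length = n := by
  simp [seqWord]

theorem seqWord_add (x : ℕ → A) (i m n : ℕ) :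
    seqWord x i (m + n) = seqWord x i m ++ seqWord x (i + m) n := by
  simp [seqWord, List.range_add, Function.comp_def, Nat.add_assoc]

theorem occursAt_iff {x : ℕ → A} {u : List A} {i : ℕ} :
    occursAt x u i ↔ ∀ k (hk : k < u.length), x (i + k) = u[k] := by
  simp [occursAt, List.ext_getElem_iff, seqWord]

theorem occursAt_seqWord (x : ℕ → A) (i n : ℕ) : occursAt x (seqWord x i n) i := by
  simp [occursAt]

theorem occursAt_append {x : ℕ → A} {u v : List A} {i : ℕ} :
    occursAt x (u ++ v) i ↔ occursAt x u i ∧ occursAt x v (i + u.length) := by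
  simp only [occursAt, List.length_append, seqWord_add]
  constructor
  · intro h
    exact List.append_inj h (seqWord_length ..)
  · rintro ⟨hu, hv⟩
    rw [hu, hv]

theorem occursAt_of_append_append {x : ℕ → A} {v s t : List A} {p : ℕ}
    (h : occursAt x (s ++ v ++ t) p) : occursAt x v (p + s.length) :=
  (occursAt_append.1 (occursAt_append.1 h).1).2

theorem occursAt_shift {x : ℕ → A} {u w : List A} {i p q : ℕ} (hu : occursAt x u i)
    (hwp : occursAt x w p) (hwq : occursAt x w q) (hpi : p ≤ i)
    (hiw : i + u.length ≤ p + w.length) : occursAt x u (q + (i - p)) := by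
  rw [occursAt_iff] at *
  intro k hk
  calc x (q + (i - p) + k) = w[i - p + k] := by rw [← hwq _ (by omega), Nat.add_assoc]
    _ = x (i + k) := by rw [← hwp _ (by omega)]; congr 1; omega
    _ = u[k] := hu k hk

theorem listOccursAt_iff_occursAt {x : ℕ → A} {w u : List A} {p : ℕ}
    (hw : occursAt x w 0) (hp : p + u.length ≤ w.length) :
    listOccursAt w u p ↔ occursAt x u p := by
  rw [occursAt_iff] at hw
  simp only [listOccursAt, hp, true_and, occursAt_iff, List.ext_getElem_iff, List.getElem_take,
    List.getElem_drop, List.length_take, List.length_drop]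
  simp only [zero_add] at hw
  constructor
  · rintro ⟨-, h⟩ k hk
    rw [← h k (by omega) hk, hw]
  · intro h
    refine ⟨by omega, fun k hk hk' => ?_⟩
    rw [← h k hk', hw]

theorem listOccursAt.infix {w u : List A} {p : ℕ} (h : listOccursAt w u p) :
    u <:+: w :=
  h.2 ▸ (List.take_prefix _ _).isInfix.trans (List.drop_suffix _ _).isInfix

theorem linRec_of_exists_return_le {x : ℕ → A} {K : ℕ}
    (h : ∀ u : List A, u ≠ [] → ∀ i, occursAt x u i →
      ∃ j, i < j ∧ j ≤ i + K * u.length ∧ occursAt x u j) :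
    LinRec K x := by
  refine ⟨fun u ⟨i₀, hi₀⟩ => ?_, fun u hu _ => h u hu⟩
  rcases eq_or_ne u [] with rfl | hu
  · exact ⟨1, fun i => ⟨i, le_rfl, by omega, by simp [occursAt, seqWord]⟩⟩
  refine ⟨i₀ + K * u.length + 1, fun i => ?_⟩
  induction i with
  | zero => exact ⟨i₀, Nat.zero_le _, by omega, hi₀⟩
  | succ i ih =>
    obtain ⟨j, hij, hj, hocc⟩ := ih
    rcases hij.eq_or_lt with rfl | hij
    · obtain ⟨j', hj', hj'K, hocc'⟩ := h u hu i hocc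
      exact ⟨j', hj', by omega, hocc'⟩
    · exact ⟨j, hij, by omega, hocc⟩

end Words

section Morphisms
variable {A : Type*} (σ : A → List A)

theorem morphApply_append {I : Type*} (θ : I → List A) (l₁ l₂ : List I) :
    morphApply θ (l₁ ++ l₂) = morphApply θ l₁ ++ morphApply θ l₂ := by
  simp [morphApply]

@[simp]
theorem morphIter_nil (k : ℕ) : morphIter σ k [] = [] := by
  induction k with
  | zero => rfl
  | succ k ih => simp [morphIter, ih, morphApply]

theorem morphIter_append (k : ℕ) (l₁ l₂ : List A) :
    morphIter σ k (l₁ ++ l₂) = morphIter σ k l₁ ++ morphIter σ k l₂ := by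
  induction k with
  | zero => rfl
  | succ k ih => simp only [morphIter, ih, morphApply_append]

theorem morphIter_cons (k : ℕ) (b : A) (l : List A) :
    morphIter σ k (b :: l) = morphIter σ k [b] ++ morphIter σ k l :=
  morphIter_append σ k [b] l

theorem morphIter_add (k n : ℕ) (l : List A) :
    morphIter σ (k + n) l = morphIter σ k (morphIter σ n l) := by
  induction k with
  | zero => simp [morphIter]
  | succ k ih => rw [Nat.succ_add]; simp only [morphIter, ih]

theorem length_morphIter_le {k M : ℕ} (hM : ∀ b, (morphIter σ k [b]).length ≤ M)
    (l : List A) : (morphIter σ k l).length ≤ l.length * M := by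
  induction l with
  | nil => simp
  | cons b l ih =>
    rw [morphIter_cons, List.length_append, List.length_cons, Nat.succ_mul]
    have := hM b
    omega

theorem infix_morphIter_of_mem {k : ℕ} {l : List A} {b : A} (hb : b ∈ l) :
    morphIter σ k [b] <:+: morphIter σ k l := by
  obtain ⟨l₁, l₂, rfl⟩ := List.append_of_mem hb
  rw [morphIter_append, morphIter_cons σ k b l₂]
  exact ⟨morphIter σ k l₁, morphIter σ k l₂, List.append_assoc ..⟩

end Morphisms

section Growth
variable {A : Type*} {σ : A → List A}

theorem Primitive.growing {a : A} (hprim : Primitive σ) (hprol : Prolongable σ a) :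
    Growing σ := by
  obtain ⟨N, -, hN⟩ := hprim
  intro b
  rw [← Filter.tendsto_add_atTop_iff_nat N]
  refine Filter.tendsto_atTop_mono (fun n => ?_) hprol.2
  rw [morphIter_add]
  exact (infix_morphIter_of_mem σ (hN b a)).length_le

theorem Growing.morphIter_ne_nil (hgrow : Growing σ) (k : ℕ) (b : A) :
    morphIter σ k [b] ≠ [] := by
  intro h
  obtain ⟨n, hn⟩ := ((hgrow b).eventually_ge_atTop 1).exists_forall_of_atTop
  have := hn (n + k) (Nat.le_add_right _ _)
  rw [morphIter_add, h, morphIter_nil] at this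
  simp at this

variable [Fintype A] [Nonempty A]

theorem minLen_le (k : ℕ) (b : A) : minLen σ k ≤ (morphIter σ k [b]).length :=
  Finset.inf'_le _ (Finset.mem_univ b)

theorem le_maxLen (k : ℕ) (b : A) : (morphIter σ k [b]).length ≤ maxLen σ k :=
  Finset.le_sup' (fun a : A => (morphIter σ k [a]).length) (Finset.mem_univ b)

theorem minLen_succ_le (k : ℕ) : minLen σ (k + 1) ≤ minLen σ k * maxLen σ 1 := by
  obtain ⟨b, -, hb⟩ := Finset.exists_mem_eq_inf' Finset.univ_nonempty
    (fun a : A => (morphIter σ k [a]).length)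
  calc minLen σ (k + 1) ≤ (morphIter σ 1 (morphIter σ k [b])).length := by
        rw [← morphIter_add, Nat.add_comm]; exact minLen_le _ b
    _ ≤ minLen σ k * maxLen σ 1 := by
        rw [minLen, hb]; exact length_morphIter_le σ (le_maxLen 1) _

theorem Growing.one_le_maxLen (hgrow : Growing σ) (k : ℕ) : 1 ≤ maxLen σ k := by
  obtain ⟨b⟩ := ‹Nonempty A›
  exact (List.length_pos_iff.2 (hgrow.morphIter_ne_nil k b)).trans_le (le_maxLen k b)

theorem Growing.exists_le_minLen_le (hgrow : Growing σ) {n : ℕ} (hn : 1 ≤ n) :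
    ∃ k, n ≤ minLen σ k ∧ minLen σ k ≤ n * maxLen σ 1 := by
  classical
  have hex : ∃ k, n ≤ minLen σ k := by
    have h : ∀ᶠ k in Filter.atTop, ∀ b : A, n ≤ (morphIter σ k [b]).length :=
      Filter.eventually_all.2 fun b => (hgrow b).eventually_ge_atTop n
    obtain ⟨k, hk⟩ := h.exists
    exact ⟨k, Finset.le_inf' _ _ fun b _ => hk b⟩
  refine ⟨Nat.find hex, Nat.find_spec hex, ?_⟩
  rcases hk : Nat.find hex with _ | k
  · simpa [minLen, morphIter] using Nat.mul_le_mul hn (hgrow.one_le_maxLen 1)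
  · have hlt : minLen σ k < n := not_le.1 (Nat.find_min hex (by omega))
    exact (minLen_succ_le k).trans (Nat.mul_le_mul_right _ hlt.le)

end Growth

section FixedPoint
variable {A : Type*} {σ : A → List A} {a : A} {x : ℕ → A}

/-- Where the block `σ^k (x m)` starts in `x = σ^k (x)`. -/
def blockStart (σ : A → List A) (x : ℕ → A) (k m : ℕ) : ℕ :=
  (morphIter σ k (seqWord x 0 m)).length

theorem blockStart_add (k m r : ℕ) :
    blockStart σ x k (m + r) = blockStart σ x k m + (morphIter σ k (seqWord x m r)).length := by
  simp [blockStart, seqWord_add, morphIter_append]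

theorem blockStart_succ (k m : ℕ) :
    blockStart σ x k (m + 1) = blockStart σ x k m + (morphIter σ k [x m]).length := by
  rw [blockStart_add]
  simp [seqWord]

theorem blockStart_add_le [Fintype A] [Nonempty A] (k m d : ℕ) :
    blockStart σ x k (m + d) ≤ blockStart σ x k m + d * maxLen σ k := by
  rw [blockStart_add]
  simpa using length_morphIter_le σ (le_maxLen k) (seqWord x m d)

theorem Growing.blockStart_strictMono (hgrow : Growing σ) (k : ℕ) :
    StrictMono (blockStart σ x k) :=
  strictMono_nat_of_lt_succ fun m => by
    rw [blockStart_succ]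
    have := List.length_pos_iff.2 (hgrow.morphIter_ne_nil k (x m))
    omega

theorem Growing.exists_blockStart_le_lt (hgrow : Growing σ) (k p : ℕ) :
    ∃ m, blockStart σ x k m ≤ p ∧ p < blockStart σ x k (m + 1) := by
  classical
  have hex : ∃ m, p < blockStart σ x k (m + 1) :=
    ⟨p, Nat.lt_succ_self p |>.trans_le ((hgrow.blockStart_strictMono k).id_le _)⟩
  refine ⟨Nat.find hex, ?_, Nat.find_spec hex⟩
  rcases h : Nat.find hex with _ | m
  · simp [blockStart, seqWord]
  · exact not_lt.1 (Nat.find_min hex (by omega))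

theorem Prolongable.exists_le_length (hprol : Prolongable σ a) (L : ℕ) :
    ∃ n, L ≤ (morphIter σ n [a]).length :=
  (hprol.2.eventually_ge_atTop L).exists

theorem IsFixedPointOf.infix_of_occursAt (hx : IsFixedPointOf σ a x) {n p : ℕ} {v : List A}
    (hv : occursAt x v p) (hlen : p + v.length ≤ (morphIter σ n [a]).length) :
    v <:+: morphIter σ n [a] :=
  listOccursAt.infix ((listOccursAt_iff_occursAt (hx.2 n) hlen).2 hv)

theorem IsFixedPointOf.occursAt_morphIter_prefix (hprol : Prolongable σ a)
    (hx : IsFixedPointOf σ a x) (k m : ℕ) : occursAt x (morphIter σ k (seqWord x 0 m)) 0 := by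
  obtain ⟨n, hn⟩ := hprol.exists_le_length m
  have hsplit : morphIter σ n [a] =
      seqWord x 0 m ++ seqWord x m ((morphIter σ n [a]).length - m) := by
    conv_lhs => rw [← hx.2 n]
    rw [← Nat.add_sub_of_le hn, seqWord_add]
    simp
  have := hx.2 (k + n)
  rw [morphIter_add, hsplit, morphIter_append] at this
  exact (occursAt_append.1 this).1

theorem IsFixedPointOf.occursAt_blockStart (hprol : Prolongable σ a)
    (hx : IsFixedPointOf σ a x) (k m r : ℕ) :
    occursAt x (morphIter σ k (seqWord x m r)) (blockStart σ x k m) := by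
  have := hx.occursAt_morphIter_prefix hprol k (m + r)
  rw [seqWord_add, morphIter_append, occursAt_append] at this
  simpa [blockStart] using this.2

end FixedPoint

section Recurrence
variable {A : Type*} {σ : A → List A} {a : A} {x : ℕ → A}

/-- `R_σ ≤ R`. -/
def PairGapLE (σ : A → List A) (R : ℕ) : Prop :=
  ∀ w u : List A, InLang σ w → InLang σ u → u.length = 2 →
    ∀ i j, listOccursAt w u i → listOccursAt w u j → i < j →
      (∀ k, i < k → k < j → ¬ listOccursAt w u k) → j - i ≤ R

/-- A factor `v` lies in some prefix `σ^n(a)`, and by primitivity in `σ^(n+N)(x (m+1))`,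
a block of `x` starting after `m`. -/
theorem IsFixedPointOf.exists_occursAt_gt (hprim : Primitive σ) (hprol : Prolongable σ a)
    (hx : IsFixedPointOf σ a x) {v : List A} {m : ℕ} (hv : occursAt x v m) :
    ∃ q, m < q ∧ occursAt x v q := by
  have hgrow := hprim.growing hprol
  obtain ⟨n, hn⟩ := hprol.exists_le_length (m + v.length)
  obtain ⟨N, -, hN⟩ := hprim
  have hinfix : v <:+: morphIter σ (n + N) [x (m + 1)] := by
    rw [morphIter_add]
    exact (hx.infix_of_occursAt hv hn).trans (infix_morphIter_of_mem σ (hN _ a))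
  obtain ⟨s, t, hst⟩ := hinfix
  have hblock := hx.occursAt_blockStart hprol (n + N) (m + 1) 1
  simp only [seqWord, List.range_one, List.map_singleton, Nat.add_zero, ← hst] at hblock
  have hstart : m + 1 ≤ blockStart σ x (n + N) (m + 1) :=
    (hgrow.blockStart_strictMono (n + N)).id_le (m + 1)
  exact ⟨_, by omega, occursAt_of_append_append hblock⟩

theorem IsFixedPointOf.exists_pair_return (hprim : Primitive σ) (hprol : Prolongable σ a)
    (hx : IsFixedPointOf σ a x) {R : ℕ} (hR : PairGapLE σ R) (m : ℕ) :
    ∃ m', m < m' ∧ m' ≤ m + R ∧ seqWord x m' 2 = seqWord x m 2 := by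
  classical
  have hex := hx.exists_occursAt_gt hprim hprol (occursAt_seqWord x m 2)
  obtain ⟨hmm', hocc⟩ := Nat.find_spec hex
  obtain ⟨n, hn⟩ := hprol.exists_le_length (Nat.find hex + 2)
  have hprefix (p : ℕ) (hp : p ≤ Nat.find hex) :
      listOccursAt (morphIter σ n [a]) (seqWord x m 2) p ↔ occursAt x (seqWord x m 2) p :=
    listOccursAt_iff_occursAt (hx.2 n) (by simp; omega)
  have hgap := hR (morphIter σ n [a]) (seqWord x m 2) ⟨a, n, List.infix_refl _⟩
    ⟨a, n, hx.infix_of_occursAt (occursAt_seqWord x m 2) (by simp; omega)⟩ (seqWord_length ..)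
    m (Nat.find hex) ((hprefix m hmm'.le).2 (occursAt_seqWord x m 2))
    ((hprefix _ le_rfl).2 hocc) hmm'
    fun k hmk hk hocck => Nat.find_min hex hk ⟨hmk, (hprefix k hk.le).1 hocck⟩
  refine ⟨Nat.find hex, hmm', by omega, ?_⟩
  simpa [occursAt] using hocc

/-- `u` lies inside `σ^k (x m x (m+1))`, because the block of `x (m+1)` is at least `|u|` long. -/
theorem IsFixedPointOf.occursAt_of_seqWord_two_eq [Fintype A] [Nonempty A]
    (hprol : Prolongable σ a) (hx : IsFixedPointOf σ a x) {k m m' i : ℕ} {u : List A}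
    (hu : occursAt x u i) (hlen : u.length ≤ minLen σ k)
    (hm : blockStart σ x k m ≤ i) (hm1 : i < blockStart σ x k (m + 1))
    (hpair : seqWord x m' 2 = seqWord x m 2) :
    occursAt x u (blockStart σ x k m' + (i - blockStart σ x k m)) := by
  have hw := hx.occursAt_blockStart hprol k m 2
  have hw' := hx.occursAt_blockStart hprol k m' 2
  rw [hpair] at hw'
  refine occursAt_shift hu hw hw' hm ?_
  have hend : blockStart σ x k (m + 2) =
      blockStart σ x k (m + 1) + (morphIter σ k [x (m + 1)]).length :=
    blockStart_succ k (m + 1)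
  have hnext := minLen_le (σ := σ) k (x (m + 1))
  rw [blockStart_add] at hend
  omega

theorem IsFixedPointOf.exists_return_le [Fintype A] [Nonempty A] (hprim : Primitive σ)
    (hprol : Prolongable σ a) (hx : IsFixedPointOf σ a x) {Q R : ℕ}
    (hQ : ∀ k, maxLen σ k ≤ Q * minLen σ k) (hR : PairGapLE σ R) {u : List A} (hu : u ≠ [])
    {i : ℕ} (hi : occursAt x u i) :
    ∃ j, i < j ∧ j ≤ i + Q * R * maxLen σ 1 * u.length ∧ occursAt x u j := by
  have hgrow := hprim.growing hprol
  obtain ⟨k, hk, hkmax⟩ := hgrow.exists_le_minLen_le (List.length_pos_iff.2 hu)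
  obtain ⟨m, hm, hm1⟩ := hgrow.exists_blockStart_le_lt (x := x) k i
  obtain ⟨m', hmm', hm'R, hpair⟩ := hx.exists_pair_return hprim hprol hR m
  refine ⟨_, ?_, ?_, hx.occursAt_of_seqWord_two_eq hprol hi hk hm hm1 hpair⟩
  · have := hgrow.blockStart_strictMono (x := x) k hmm'
    omega
  · have hshift :
        blockStart σ x k m' ≤ blockStart σ x k m + R * (Q * (u.length * maxLen σ 1)) :=
      calc blockStart σ x k m' = blockStart σ x k (m + (m' - m)) := by
            rw [Nat.add_sub_cancel' hmm'.le]
        _ ≤ blockStart σ x k m + (m' - m) * maxLen σ k := blockStart_add_le k m _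
        _ ≤ blockStart σ x k m + R * (Q * (u.length * maxLen σ 1)) := by
          gcongr
          · omega
          · exact (hQ k).trans (Nat.mul_le_mul_left Q hkmax)
    have : R * (Q * (u.length * maxLen σ 1)) = Q * R * maxLen σ 1 * u.length := by ring
    omega

end Recurrence

theorem fixedPoint_linearly_recurrent_general {A : Type*} [Fintype A] [Nonempty A]
    (σ : A → List A) (a : A)
    (hprim : Primitive σ) (hprol : Prolongable σ a)
    (x : ℕ → A) (hx : IsFixedPointOf σ a x)
    (Q R : ℕ) (hQ : ∀ k, maxLen σ k ≤ Q * minLen σ k)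
    (hR : ∀ w u : List A, InLang σ w → InLang σ u → u.length = 2 →
      ∀ i j, listOccursAt w u i → listOccursAt w u j → i < j →
        (∀ k, i < k → k < j → ¬ listOccursAt w u k) → j - i ≤ R) :
    LinRec (Q * R * maxLen σ 1) x :=
  linRec_of_exists_return_le fun _ hu _ hi => hx.exists_return_le hprim hprol hQ hR hu hi

/-- Proposition (Durand 1998): the fixed point `x = σ^∞(a)` of a primitive substitution
`σ` prolongable on `a` is linearly recurrent with constant `K_σ = Q_σ · R_σ · |σ|`,
where `Q_σ` satisfies `|σ^k| ≤ Q_σ·⟨σ^k⟩` for all `k` and `R_σ` bounds the gap between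
successive occurrences of length-2 factors of the language of `σ`. -/
theorem fixedPoint_linearly_recurrent {A : Type*} [Fintype A] [Nonempty A]
    (σ : A → List A) (a : A)
    (hprim : Primitive σ) (hgrow : Growing σ) (hprol : Prolongable σ a)
    (x : ℕ → A) (hx : IsFixedPointOf σ a x)
    (Q R : ℕ) (hQ : ∀ k, maxLen σ k ≤ Q * minLen σ k)
    (hR : ∀ w u : List A, InLang σ w → InLang σ u → u.length = 2 →
      ∀ i j, listOccursAt w u i → listOccursAt w u j → i < j →
        (∀ k, i < k → k < j → ¬ listOccursAt w u k) → j - i ≤ R) :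
    LinRec (Q * R * maxLen σ 1) x :=
  fixedPoint_linearly_recurrent_general σ a hprim hprol x hx Q R hQ hR
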